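/- Transport equation for the inverse foliation density μ. In the eikonal setup, define F_{αβ}=∂_φ g_{αβ}(φ,∂φ) and G^γ_{αβ}=∂_{(∂_γφ)} g_{αβ}(φ,∂φ) (partial derivatives of the inverse-matrix entries g_{αβ}, viewed as smooth functions of (φ,∂φ), evaluated along (φ,∂φ)); for vector fields V,W,Z set F_{VW}=Σ F_{αβ}V^αW^β, G^γ_{VW}=Σ G^γ_{αβ}V^αW^β, and (FG)_{VW}(Z)=F_{VW}·Zφ+Σ_γ G^γ_{VW}·Z(∂_γφ). Then on U one has L̊μ = −(1/2)μ[(FG)_{L̊L̊}(L̊)+2(FG)_{T̃L̊}(L̊)] + (1/2)F_{L̊L̊}·Tφ + (1/2)Σ_γ G^γ_{L̊L̊}·T(∂_γφ). -/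

import Mathlib

noncomputable section

open Real MeasureTheory

namespace PaperSP4D

/-- A spacetime point in `ℝ^{1+4}`; coordinate `0` is the time `t`. -/
abbrev Pt : Type := Fin 5 → ℝ

/-- The Euclidean norm on `ℝ⁴`. -/
def nrm (x : Fin 4 → ℝ) : ℝ := Real.sqrt (∑ i, (x i) ^ 2)

/-- The spatial radius `r = |x|` of a spacetime point. -/
def rad (p : Pt) : ℝ := nrm fun i => p i.succ

/-- Derivative of `f` along the vector field `V`. -/
def vfD (V : Pt → Pt) (f : Pt → ℝ) : Pt → ℝ := fun p => fderiv ℝ f p (V p)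

/-- The partial derivative `∂_α`. -/
def pd (α : Fin 5) : (Pt → ℝ) → Pt → ℝ := vfD fun _ => Pi.single α 1

/-- Apply a word (list) of vector fields, leftmost applied last. -/
def wordD (w : List (Pt → Pt)) (f : Pt → ℝ) : Pt → ℝ := w.foldr vfD f

/-- `L = ∂_t + ∂_r`. -/
def Lvf : Pt → Pt := fun p => Fin.cons 1 fun i => p i.succ / rad p

/-- `L̲ = ∂_t − ∂_r`. -/
def Lbvf : Pt → Pt := fun p => Fin.cons 1 fun i => -(p i.succ / rad p)

/-- The scaling field `S = t∂_t + Σ x^k ∂_k`. -/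
def Svf : Pt → Pt := fun p => p

/-- The Lorentz boost `H_i = t∂_i + x^i∂_t`. -/
def Hvf (i : Fin 4) : Pt → Pt :=
  fun p => Fin.cons (p i.succ) fun j => if j = i then p 0 else 0

/-- The rotation `Ω_{ij} = x^i∂_j − x^j∂_i`. -/
def Ovf (i j : Fin 4) : Pt → Pt :=
  fun p => Fin.cons 0 fun k =>
    (if k = j then p i.succ else 0) - (if k = i then p j.succ else 0)

/-- Index set for the rotations `Ω_{ij}`, `1 ≤ i < j ≤ 4`. -/
abbrev OmIdx : Type := {ij : Fin 4 × Fin 4 // ij.1 < ij.2}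

/-- A word `Ω^κ` of rotation fields, given by a list of indices. -/
def oword (κ : List OmIdx) (f : Pt → ℝ) : Pt → ℝ :=
  wordD (κ.map fun ij => Ovf ij.1.1 ij.1.2) f

/-- A word `∂^q` of partial derivatives, given by a list of indices. -/
def pword (q : List (Fin 5)) (f : Pt → ℝ) : Pt → ℝ :=
  wordD (q.map fun α => fun _ => Pi.single α 1) f

/-- A word of rotation fields, given by a tuple of indices. -/
def owordF {k : ℕ} (w : Fin k → OmIdx) (f : Pt → ℝ) : Pt → ℝ :=
  wordD (List.ofFn fun i => Ovf ((w i).1.1) ((w i).1.2)) f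

/-- A word of partial derivatives, given by a tuple of indices. -/
def pwordF {k : ℕ} (w : Fin k → Fin 5) (f : Pt → ℝ) : Pt → ℝ :=
  wordD (List.ofFn fun i => fun _ => Pi.single (w i) 1) f

/-- The Minkowski metric `diag(−1,1,1,1,1)`. -/
def mink (α β : Fin 5) : ℝ :=
  if α = 0 then (if β = 0 then -1 else 0) else (if α = β then 1 else 0)

/-- The matrix `(g^{αβ}(φ,∂φ))(p)`. -/
def Gmat (g : Fin 5 → Fin 5 → ℝ → Pt → ℝ) (φ : Pt → ℝ) (p : Pt) :
    Matrix (Fin 5) (Fin 5) ℝ :=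
  Matrix.of fun α β => g α β (φ p) fun γ => pd γ φ p

/-- The bilinear form `g(V,W) = Σ g_{αβ}V^αW^β` built from the inverse matrix `(g_{αβ})`. -/
def gLow (g : Fin 5 → Fin 5 → ℝ → Pt → ℝ) (φ : Pt → ℝ) (p : Pt) (V W : Pt) : ℝ :=
  ∑ α, ∑ β, (Gmat g φ p)⁻¹ α β * V α * W β

/-- The inverse foliation density `μ = −(Σ_α g^{α0}∂_αu)^{−1}`. -/
def muF (g : Fin 5 → Fin 5 → ℝ → Pt → ℝ) (φ u : Pt → ℝ) (p : Pt) : ℝ :=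
  -(∑ α, g α 0 (φ p) (fun γ => pd γ φ p) * pd α u p)⁻¹

/-- The rescaled null field `L̊ = −μ Σ g^{αβ}(∂_αu)∂_β`. -/
def Lr (g : Fin 5 → Fin 5 → ℝ → Pt → ℝ) (φ u : Pt → ℝ) (p : Pt) : Pt :=
  fun β => -(muF g φ u p) * ∑ α, g α β (φ p) (fun γ => pd γ φ p) * pd α u p

/-- `T̃ = −g^{ν0}∂_ν − L̊`. -/
def Ttil (g : Fin 5 → Fin 5 → ℝ → Pt → ℝ) (φ u : Pt → ℝ) (p : Pt) : Pt :=
  fun ν => -g ν 0 (φ p) (fun γ => pd γ φ p) - Lr g φ u p ν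

/-- `T = μT̃`. -/
def Tvf (g : Fin 5 → Fin 5 → ℝ → Pt → ℝ) (φ u : Pt → ℝ) (p : Pt) : Pt :=
  fun ν => muF g φ u p * Ttil g φ u p ν

/-- `∂̲L̊ = μL̊ + 2T`. -/
def uLr (g : Fin 5 → Fin 5 → ℝ → Pt → ℝ) (φ u : Pt → ℝ) (p : Pt) : Pt :=
  fun ν => muF g φ u p * Lr g φ u p ν + 2 * Tvf g φ u p ν

/-- The eikonal setup: `U` open, smooth symmetric coefficients with `g^{00} ≡ −1`,
`φ, u` smooth on `U`, `(g^{αβ}(φ,∂φ))` invertible, `u` solving the eikonal equation with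
`−Σ g^{α0}∂_αu > 0` on `U`. -/
structure EikonalSetup (U : Set Pt) (g : Fin 5 → Fin 5 → ℝ → Pt → ℝ)
    (φ u : Pt → ℝ) : Prop where
  openU : IsOpen U
  smooth_g : ∀ α β, ContDiff ℝ (⊤ : ℕ∞) fun q : ℝ × Pt => g α β q.1 q.2
  symm_g : ∀ α β a v, g α β a v = g β α a v
  g00 : ∀ a v, g 0 0 a v = -1
  smooth_φ : ContDiffOn ℝ (⊤ : ℕ∞) φ U
  smooth_u : ContDiffOn ℝ (⊤ : ℕ∞) u U
  inv_g : ∀ p ∈ U, IsUnit (Gmat g φ p)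
  eikonal : ∀ p ∈ U,
    (∑ α, ∑ β, g α β (φ p) (fun γ => pd γ φ p) * pd α u p * pd β u p) = 0
  pos : ∀ p ∈ U, 0 < -(∑ α, g α 0 (φ p) (fun γ => pd γ φ p) * pd α u p)

/-- The entries `g_{αβ}` of the inverse matrix, as smooth functions of `(φ, ∂φ)`. -/
def lowInv (g : Fin 5 → Fin 5 → ℝ → Pt → ℝ) (α β : Fin 5) (q : ℝ × Pt) : ℝ :=
  ((Matrix.of fun α' β' => g α' β' q.1 q.2 : Matrix (Fin 5) (Fin 5) ℝ))⁻¹ α β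

/-- `F_{αβ} = ∂_φ g_{αβ}`, evaluated along `(φ, ∂φ)`. -/
def lowF (g : Fin 5 → Fin 5 → ℝ → Pt → ℝ) (φ : Pt → ℝ) (α β : Fin 5) (p : Pt) : ℝ :=
  fderiv ℝ (lowInv g α β) (φ p, fun γ => pd γ φ p) ((1 : ℝ), (0 : Pt))

/-- `G^γ_{αβ} = ∂_{(∂_γφ)} g_{αβ}`, evaluated along `(φ, ∂φ)`. -/
def lowG (g : Fin 5 → Fin 5 → ℝ → Pt → ℝ) (φ : Pt → ℝ) (γ0 α β : Fin 5) (p : Pt) : ℝ :=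
  fderiv ℝ (lowInv g α β) (φ p, fun γ => pd γ φ p) ((0 : ℝ), Pi.single γ0 1)

/-- The contraction `F_{VW}`. -/
def Fc (g : Fin 5 → Fin 5 → ℝ → Pt → ℝ) (φ : Pt → ℝ) (p : Pt) (V W : Pt) : ℝ :=
  ∑ α, ∑ β, lowF g φ α β p * V α * W β

/-- The contraction `G^γ_{VW}`. -/
def Gc (g : Fin 5 → Fin 5 → ℝ → Pt → ℝ) (φ : Pt → ℝ) (γ0 : Fin 5) (p : Pt) (V W : Pt) : ℝ :=
  ∑ α, ∑ β, lowG g φ γ0 α β p * V α * W β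

/-- `(FG)_{VW}(Z) = F_{VW}·Zφ + Σ_γ G^γ_{VW}·Z(∂_γφ)`. -/
def FGc (g : Fin 5 → Fin 5 → ℝ → Pt → ℝ) (φ : Pt → ℝ) (p : Pt) (V W : Pt)
    (Z : Pt → Pt) : ℝ :=
  Fc g φ p V W * vfD Z φ p + ∑ γ, Gc g φ γ p V W * vfD Z (pd γ φ) p

/-!
Write `h = (g_{αβ})` for the lowered metric, viewed as a field of bilinear forms, and `ψ = du`.
By definition `h(L̊, ·) = -μψ` and `L̊⁰ = 1`; the eikonal equation says `ψ(L̊) = 0`; and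
`h(L̊ + T̃, ·) = -dt`. Differentiate `h(L̊, ·) + μψ = 0` along `L̊` and pair it with
`Z = L̊ + T̃`. In the result the term `h(Z, L̊L̊) = -L̊(L̊⁰)` vanishes, the coefficient `ψ(Z)` of
`L̊μ` equals `μ⁻¹`, and the Hessian term `∇²u(L̊, Z)` is found by differentiating `ψ(L̊) = 0` and
`h(L̊, L̊) = 0` along `Z`. What remains are derivatives of `h`, which the chain rule through
`(φ, ∂φ)` turns into the contractions `(FG)`.
-/

end PaperSP4D

open Filter Topology

section Transport

variable {E F : Type*} [NormedAddCommGroup E] [NormedSpace ℝ E]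
  [NormedAddCommGroup F] [NormedSpace ℝ F]

lemma HasFDerivAt.eq_zero_of_eventually_const {f : E → F} {f' : E →L[ℝ] F} {p : E} {c : F}
    (hf : HasFDerivAt f f' p) (hc : ∀ᶠ x in 𝓝 p, f x = c) : f' = 0 :=
  hf.unique ((hasFDerivAt_const c p).congr_of_eventuallyEq hc)

/-- In the application `H`, `L`, `ℓ`, `Z` are `(g_{αβ})`, `L̊`, `dt` and `L̊ + T̃`. -/
theorem fderiv_transport_of_eikonal
    {H : E → E →L[ℝ] E →L[ℝ] ℝ} {L : E → E} {μ u : E → ℝ} {ℓ : E →L[ℝ] ℝ} {p Z : E}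
    (hH : DifferentiableAt ℝ H p) (hL : DifferentiableAt ℝ L p) (hμ : DifferentiableAt ℝ μ p)
    (hu : ContDiffAt ℝ 2 u p) (hsymm : ∀ v w, H p v w = H p w v)
    (hHL : ∀ᶠ x in 𝓝 p, H x (L x) = -μ x • fderiv ℝ u x)
    (hLu : ∀ᶠ x in 𝓝 p, fderiv ℝ u x (L x) = 0)
    (hℓL : ∀ᶠ x in 𝓝 p, ℓ (L x) = 1) (hZ : H p Z = -ℓ) :
    fderiv ℝ μ p (L p)
      = -μ p * fderiv ℝ H p (L p) (L p) Z + μ p / 2 * fderiv ℝ H p Z (L p) (L p) := by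
  have hdu : DifferentiableAt ℝ (fderiv ℝ u) p :=
    (hu.fderiv_right (m := 1) le_rfl).differentiableAt one_ne_zero
  have hu2 : IsSymmSndFDerivAt ℝ u p := hu.isSymmSndFDerivAt (by simp)
  have hHLp : ∀ w, H p (L p) w = -μ p * fderiv ℝ u p w := fun w => by
    simp [hHL.self_of_nhds]
  have hHLL : ∀ᶠ x in 𝓝 p, H x (L x) (L x) = 0 := by
    filter_upwards [hHL, hLu] with x hx hx'
    simp [hx, hx']
  have dHL := congrArg (fun T => T (L p) Z) <|
    ((hH.hasFDerivAt.clm_apply hL.hasFDerivAt).add (hμ.hasFDerivAt.smul hdu.hasFDerivAt))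
      |>.eq_zero_of_eventually_const (c := 0) (by filter_upwards [hHL] with x hx; simp [hx])
  have dLu := congrArg (fun T => T Z) <|
    (hdu.hasFDerivAt.clm_apply hL.hasFDerivAt).eq_zero_of_eventually_const hLu
  have dHLL := congrArg (fun T => T Z) <|
    ((hH.hasFDerivAt.clm_apply hL.hasFDerivAt).clm_apply hL.hasFDerivAt)
      |>.eq_zero_of_eventually_const hHLL
  have dℓL := congrArg (fun T => T (L p)) <|
    (ℓ.hasFDerivAt.comp p hL.hasFDerivAt).eq_zero_of_eventually_const hℓL
  simp only [add_apply, ContinuousLinearMap.coe_comp, Function.comp_apply,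
    ContinuousLinearMap.flip_apply, smul_apply,
    ContinuousLinearMap.smulRight_apply, smul_eq_mul, zero_apply] at dHL dLu dHLL dℓL
  have hμψZ : μ p * fderiv ℝ u p Z = 1 := by
    have := hHLp Z
    rw [hsymm, hZ] at this
    simp only [neg_apply, hℓL.self_of_nhds] at this
    linarith
  rw [hsymm, hZ, neg_apply, dℓL, neg_zero, zero_add] at dHL
  rw [hsymm (fderiv ℝ L p Z), hHLp] at dHLL
  rw [hu2] at dLu
  linear_combination μ p * dHL - fderiv ℝ μ p (L p) * hμψZ - μ p / 2 * dHLL - μ p ^ 2 * dLu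

end Transport

section MatrixBilin

open Matrix

variable {ι E : Type*} [Fintype ι] [NormedAddCommGroup E] [NormedSpace ℝ E]

def coordBilin (α β : ι) : (ι → ℝ) →L[ℝ] (ι → ℝ) →L[ℝ] ℝ :=
  (ContinuousLinearMap.mul ℝ ℝ).bilinearComp (.proj α) (.proj β)

def matrixBilin (A : Matrix ι ι ℝ) : (ι → ℝ) →L[ℝ] (ι → ℝ) →L[ℝ] ℝ :=
  ∑ α, ∑ β, A α β • coordBilin α β

@[simp]
lemma matrixBilin_apply (A : Matrix ι ι ℝ) (v w : ι → ℝ) :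
    matrixBilin A v w = ∑ α, ∑ β, A α β * v α * w β := by
  simp [matrixBilin, coordBilin, mul_assoc]

lemma matrixBilin_apply_eq_vecMul_dotProduct (A : Matrix ι ι ℝ) (v w : ι → ℝ) :
    matrixBilin A v w = (v ᵥ* A) ⬝ᵥ w := by
  simp only [matrixBilin_apply, Matrix.vecMul, dotProduct, Finset.sum_mul]
  rw [Finset.sum_comm]
  simp only [mul_comm (v _)]

lemma matrixBilin_comm {A : Matrix ι ι ℝ} (hA : A.IsSymm) (v w : ι → ℝ) :
    matrixBilin A v w = matrixBilin A w v := by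
  simp only [matrixBilin_apply]
  rw [Finset.sum_comm]
  refine Finset.sum_congr rfl fun α _ => Finset.sum_congr rfl fun β _ => ?_
  rw [Matrix.IsSymm.apply hA]
  ring

-- Stated for a general `F`: with `F` a space of bilinear maps, `HasFDerivAt.smul_const` fails
-- to find its `IsBoundedSMul` instance.
lemma HasFDerivAt.sum_sum_smul_const {F : Type*} [NormedAddCommGroup F] [NormedSpace ℝ F]
    {A : E → Matrix ι ι ℝ} {A' : ι → ι → E →L[ℝ] ℝ} {p : E}
    (hA : ∀ α β, HasFDerivAt (fun x => A x α β) (A' α β) p) (B : ι → ι → F) :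
    HasFDerivAt (fun x => ∑ α, ∑ β, A x α β • B α β)
      (∑ α, ∑ β, (A' α β).smulRight (B α β)) p :=
  HasFDerivAt.fun_sum fun α _ => HasFDerivAt.fun_sum fun β _ => (hA α β).smul_const (B α β)

lemma hasFDerivAt_matrixBilin {A : E → Matrix ι ι ℝ} {A' : ι → ι → E →L[ℝ] ℝ} {p : E}
    (hA : ∀ α β, HasFDerivAt (fun x => A x α β) (A' α β) p) :
    HasFDerivAt (fun x => matrixBilin (A x))
      (∑ α, ∑ β, (A' α β).smulRight (coordBilin α β)) p :=
  HasFDerivAt.sum_sum_smul_const hA coordBilin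

lemma fderiv_matrixBilin_apply {A : E → Matrix ι ι ℝ} {p : E}
    (hA : ∀ α β, DifferentiableAt ℝ (fun x => A x α β) p) (z : E) :
    fderiv ℝ (fun x => matrixBilin (A x)) p z
      = matrixBilin (Matrix.of fun α β => fderiv ℝ (fun x => A x α β) p z) := by
  rw [(hasFDerivAt_matrixBilin fun α β => (hA α β).hasFDerivAt).fderiv]
  simp [matrixBilin]

variable [DecidableEq ι]

lemma DifferentiableAt.matrix_det {A : E → Matrix ι ι ℝ} {p : E}
    (hA : ∀ α β, DifferentiableAt ℝ (fun x => A x α β) p) :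
    DifferentiableAt ℝ (fun x => (A x).det) p := by
  simp only [Matrix.det_apply']
  fun_prop

lemma DifferentiableAt.matrix_inv_apply {A : E → Matrix ι ι ℝ} {p : E}
    (hA : ∀ α β, DifferentiableAt ℝ (fun x => A x α β) p) (hdet : (A p).det ≠ 0) (α β : ι) :
    DifferentiableAt ℝ (fun x => (A x)⁻¹ α β) p := by
  have hadj : DifferentiableAt ℝ (fun x => (A x).adjugate α β) p := by
    simp only [Matrix.adjugate_apply]
    refine DifferentiableAt.matrix_det fun γ δ => ?_
    simp only [Matrix.updateRow_apply]
    split_ifs <;> simp [hA]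
  simp only [Matrix.inv_def, Matrix.smul_apply, Ring.inverse_eq_inv', smul_eq_mul]
  exact ((DifferentiableAt.matrix_det hA).inv hdet).mul hadj

lemma ContinuousLinearMap.apply_prod_eq_sum {F : Type*} [NormedAddCommGroup F]
    [NormedSpace ℝ F] (T : ℝ × (ι → ℝ) →L[ℝ] F) (a : ℝ) (w : ι → ℝ) :
    T (a, w) = a • T (1, 0) + ∑ γ, w γ • T (0, Pi.single γ 1) := by
  have hw : ((a, w) : ℝ × (ι → ℝ))
      = a • (1, 0) + ∑ γ, w γ • ((0 : ℝ), (Pi.single γ 1 : ι → ℝ)) := by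
    ext
    · simp [Prod.fst_sum]
    · simp [Prod.snd_sum, Pi.single_apply]
  rw [hw, map_add, map_smul, map_sum]
  simp only [map_smul]

end MatrixBilin

namespace PaperSP4D

section Coordinates

open Matrix

def jet (φ : Pt → ℝ) (x : Pt) : ℝ × Pt := (φ x, fun γ => pd γ φ x)

def coordGrad (u : Pt → ℝ) (x : Pt) : Pt := fun α => pd α u x

def lowerForm (g : Fin 5 → Fin 5 → ℝ → Pt → ℝ) (φ : Pt → ℝ) (x : Pt) :
    Pt →L[ℝ] Pt →L[ℝ] ℝ :=
  matrixBilin (Gmat g φ x)⁻¹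

lemma fderiv_apply_eq_dotProduct_coordGrad (f : Pt → ℝ) (x w : Pt) :
    fderiv ℝ f x w = w ⬝ᵥ coordGrad f x := by
  rw [← ContinuousLinearMap.coe_coe, LinearMap.pi_apply_eq_sum_univ]
  refine Finset.sum_congr rfl fun i _ => ?_
  simp only [coordGrad, pd, vfD, smul_eq_mul, ContinuousLinearMap.coe_coe]
  congr 2
  ext j
  simp [Pi.single_apply, eq_comm]

lemma contDiffAt_pd {f : Pt → ℝ} {x : Pt} (hf : ContDiffAt ℝ (⊤ : ℕ∞) f x) (γ : Fin 5) :
    ContDiffAt ℝ (⊤ : ℕ∞) (pd γ f) x :=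
  (hf.fderiv_right le_rfl).clm_apply contDiffAt_const

lemma Tvf_eq_smul (g : Fin 5 → Fin 5 → ℝ → Pt → ℝ) (φ u : Pt → ℝ) (x : Pt) :
    Tvf g φ u x = muF g φ u x • Ttil g φ u x := rfl

lemma Lr_eq_smul_vecMul (g : Fin 5 → Fin 5 → ℝ → Pt → ℝ) (φ u : Pt → ℝ) (x : Pt) :
    Lr g φ u x = -muF g φ u x • (coordGrad u x ᵥ* Gmat g φ x) := by
  ext β
  simp [Lr, vecMul, dotProduct, coordGrad, Gmat, mul_comm]

lemma muF_eq_inv_vecMul (g : Fin 5 → Fin 5 → ℝ → Pt → ℝ) (φ u : Pt → ℝ) (x : Pt) :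
    muF g φ u x = -((coordGrad u x ᵥ* Gmat g φ x) 0)⁻¹ := by
  simp [muF, vecMul, dotProduct, coordGrad, Gmat, mul_comm]

variable {U : Set Pt} {g : Fin 5 → Fin 5 → ℝ → Pt → ℝ} {φ u : Pt → ℝ} {x p : Pt}

namespace EikonalSetup

lemma Gmat_isSymm (h : EikonalSetup U g φ u) (x : Pt) : (Gmat g φ x).IsSymm :=
  IsSymm.ext fun α β => h.symm_g β α _ _

lemma det_Gmat_ne_zero (h : EikonalSetup U g φ u) (hx : x ∈ U) : (Gmat g φ x).det ≠ 0 :=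
  ((isUnit_iff_isUnit_det _).mp (h.inv_g x hx)).ne_zero

lemma vecMul_Gmat_zero_ne_zero (h : EikonalSetup U g φ u) (hx : x ∈ U) :
    (coordGrad u x ᵥ* Gmat g φ x) 0 ≠ 0 := by
  have := h.pos x hx
  simp only [vecMul, dotProduct, coordGrad, Gmat, of_apply]
  simp only [mul_comm (pd _ u x)]
  linarith

lemma Lr_zero (h : EikonalSetup U g φ u) (hx : x ∈ U) : Lr g φ u x 0 = 1 := by
  rw [Lr_eq_smul_vecMul, muF_eq_inv_vecMul]
  simp [h.vecMul_Gmat_zero_ne_zero hx]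

lemma fderiv_apply_Lr (h : EikonalSetup U g φ u) (hx : x ∈ U) :
    fderiv ℝ u x (Lr g φ u x) = 0 := by
  have heik : (coordGrad u x ᵥ* Gmat g φ x) ⬝ᵥ coordGrad u x = 0 := by
    rw [← matrixBilin_apply_eq_vecMul_dotProduct, matrixBilin_apply, ← h.eikonal x hx]
    rfl
  rw [fderiv_apply_eq_dotProduct_coordGrad, Lr_eq_smul_vecMul, smul_dotProduct, heik, smul_zero]

lemma lowerForm_Lr (h : EikonalSetup U g φ u) (hx : x ∈ U) :
    lowerForm g φ x (Lr g φ u x) = -muF g φ u x • fderiv ℝ u x := by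
  ext w
  rw [lowerForm, matrixBilin_apply_eq_vecMul_dotProduct, Lr_eq_smul_vecMul, smul_vecMul,
    vecMul_vecMul, mul_nonsing_inv _ (isUnit_iff_ne_zero.2 (h.det_Gmat_ne_zero hx)), vecMul_one,
    _root_.smul_apply, fderiv_apply_eq_dotProduct_coordGrad, smul_dotProduct,
    dotProduct_comm]

lemma Lr_add_Ttil (h : EikonalSetup U g φ u) (x : Pt) :
    Lr g φ u x + Ttil g φ u x = -(Pi.single 0 1 ᵥ* Gmat g φ x) := by
  ext ν
  simp [Ttil, Gmat, h.symm_g 0 ν]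

lemma lowerForm_Lr_add_Ttil (h : EikonalSetup U g φ u) (hx : x ∈ U) :
    lowerForm g φ x (Lr g φ u x + Ttil g φ u x) = -ContinuousLinearMap.proj 0 := by
  ext w
  rw [lowerForm, matrixBilin_apply_eq_vecMul_dotProduct, h.Lr_add_Ttil, neg_vecMul,
    vecMul_vecMul, mul_nonsing_inv _ (isUnit_iff_ne_zero.2 (h.det_Gmat_ne_zero hx)), vecMul_one]
  simp

lemma contDiffAt_jet (h : EikonalSetup U g φ u) (hx : x ∈ U) :
    ContDiffAt ℝ (⊤ : ℕ∞) (jet φ) x :=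
  have hφ := h.smooth_φ.contDiffAt (h.openU.mem_nhds hx)
  hφ.prodMk (contDiffAt_pi.2 (contDiffAt_pd hφ))

lemma contDiffAt_u (h : EikonalSetup U g φ u) (hx : x ∈ U) : ContDiffAt ℝ (⊤ : ℕ∞) u x :=
  h.smooth_u.contDiffAt (h.openU.mem_nhds hx)

lemma differentiableAt_lowInv (h : EikonalSetup U g φ u) (hx : x ∈ U) (α β : Fin 5) :
    DifferentiableAt ℝ (lowInv g α β) (jet φ x) :=
  DifferentiableAt.matrix_inv_apply
    (fun α' β' => ((h.smooth_g α' β').differentiable (by simp)).differentiableAt)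
    (p := jet φ x) (h.det_Gmat_ne_zero hx) α β

lemma fderiv_lowInv_jet_apply (h : EikonalSetup U g φ u) (hp : p ∈ U) (α β : Fin 5) (z : Pt) :
    fderiv ℝ (fun y => lowInv g α β (jet φ y)) p z
      = lowF g φ α β p * fderiv ℝ φ p z + ∑ γ, lowG g φ γ α β p * fderiv ℝ (pd γ φ) p z := by
  have hφ := h.smooth_φ.contDiffAt (h.openU.mem_nhds hp)
  have hjet : HasFDerivAt (jet φ)
      ((fderiv ℝ φ p).prod (ContinuousLinearMap.pi fun γ => fderiv ℝ (pd γ φ) p)) p :=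
    (hφ.differentiableAt (by simp)).hasFDerivAt.prodMk (hasFDerivAt_pi.2 fun γ =>
      ((contDiffAt_pd hφ γ).differentiableAt (by simp)).hasFDerivAt)
  change fderiv ℝ (lowInv g α β ∘ jet φ) p z = _
  rw [((h.differentiableAt_lowInv hp α β).hasFDerivAt.comp p hjet).fderiv,
    ContinuousLinearMap.comp_apply, ContinuousLinearMap.prod_apply,
    ContinuousLinearMap.apply_prod_eq_sum]
  simp [lowF, lowG, jet, mul_comm]

lemma differentiableAt_lowerForm (h : EikonalSetup U g φ u) (hx : x ∈ U) :
    DifferentiableAt ℝ (lowerForm g φ) x :=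
  (hasFDerivAt_matrixBilin fun α β =>
    ((h.differentiableAt_lowInv hx α β).comp x
      ((h.contDiffAt_jet hx).differentiableAt (by simp))).hasFDerivAt).differentiableAt

lemma fderiv_lowerForm_apply (h : EikonalSetup U g φ u) (hp : p ∈ U) (z : Pt) :
    fderiv ℝ (lowerForm g φ) p z
      = matrixBilin (of fun α β =>
          lowF g φ α β p * fderiv ℝ φ p z + ∑ γ, lowG g φ γ α β p * fderiv ℝ (pd γ φ) p z) := by
  change fderiv ℝ (fun y => matrixBilin (of fun α β => lowInv g α β (jet φ y))) p z = _
  rw [fderiv_matrixBilin_apply]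
  · simp only [of_apply, h.fderiv_lowInv_jet_apply hp]
  · exact fun α β => (h.differentiableAt_lowInv hp α β).comp p
      ((h.contDiffAt_jet hp).differentiableAt (by simp))

lemma lowInv_comm (h : EikonalSetup U g φ u) (α β : Fin 5) : lowInv g α β = lowInv g β α :=
  funext fun q => (IsSymm.inv (IsSymm.ext fun i j => h.symm_g j i q.1 q.2 :
    (of fun i j => g i j q.1 q.2).IsSymm)).apply α β |>.symm

lemma fderiv_lowerForm_comm (h : EikonalSetup U g φ u) (hp : p ∈ U) (z v w : Pt) :
    fderiv ℝ (lowerForm g φ) p z v w = fderiv ℝ (lowerForm g φ) p z w v := by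
  rw [h.fderiv_lowerForm_apply hp]
  refine matrixBilin_comm (IsSymm.ext fun α β => ?_) v w
  simp only [of_apply, lowF, lowG, h.lowInv_comm α β]

lemma FGc_eq_fderiv_lowerForm (h : EikonalSetup U g φ u) (hp : p ∈ U) (V W : Pt) (Z : Pt → Pt) :
    FGc g φ p V W Z = fderiv ℝ (lowerForm g φ) p (Z p) V W := by
  rw [h.fderiv_lowerForm_apply hp, matrixBilin_apply]
  simp only [FGc, Fc, Gc, vfD, of_apply, add_mul, Finset.sum_mul, Finset.sum_add_distrib]
  congr 1
  · exact Finset.sum_congr rfl fun α _ => Finset.sum_congr rfl fun β _ => by ring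
  · rw [Finset.sum_comm]
    refine Finset.sum_congr rfl fun α _ => ?_
    rw [Finset.sum_comm]
    exact Finset.sum_congr rfl fun β _ => Finset.sum_congr rfl fun γ _ => by ring

lemma differentiableAt_upperCoeff (h : EikonalSetup U g φ u) (hx : x ∈ U) (α β : Fin 5) :
    DifferentiableAt ℝ (fun y => g α β (φ y) fun γ => pd γ φ y) x :=
  ((h.smooth_g α β).differentiable (by simp)).differentiableAt.comp x
    ((h.contDiffAt_jet hx).differentiableAt (by simp))

lemma differentiableAt_pd_u (h : EikonalSetup U g φ u) (hx : x ∈ U) (α : Fin 5) :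
    DifferentiableAt ℝ (pd α u) x :=
  (contDiffAt_pd (h.contDiffAt_u hx) α).differentiableAt (by simp)

lemma differentiableAt_muF (h : EikonalSetup U g φ u) (hx : x ∈ U) :
    DifferentiableAt ℝ (muF g φ u) x :=
  ((DifferentiableAt.fun_sum fun α _ => (h.differentiableAt_upperCoeff hx α 0).mul
    (h.differentiableAt_pd_u hx α)).inv (neg_pos.1 (h.pos x hx)).ne).neg

lemma differentiableAt_Lr (h : EikonalSetup U g φ u) (hx : x ∈ U) :
    DifferentiableAt ℝ (Lr g φ u) x :=
  differentiableAt_pi.2 fun β => (h.differentiableAt_muF hx).neg.mul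
    (DifferentiableAt.fun_sum fun α _ => (h.differentiableAt_upperCoeff hx α β).mul
      (h.differentiableAt_pd_u hx α))

lemma fderiv_muF_Lr (h : EikonalSetup U g φ u) (hp : p ∈ U) :
    fderiv ℝ (muF g φ u) p (Lr g φ u p)
      = -muF g φ u p * fderiv ℝ (lowerForm g φ) p (Lr g φ u p) (Lr g φ u p)
            (Lr g φ u p + Ttil g φ u p)
        + muF g φ u p / 2 * fderiv ℝ (lowerForm g φ) p (Lr g φ u p + Ttil g φ u p)
            (Lr g φ u p) (Lr g φ u p) := by
  have hU : ∀ᶠ x in 𝓝 p, x ∈ U := h.openU.mem_nhds hp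
  exact fderiv_transport_of_eikonal (h.differentiableAt_lowerForm hp) (h.differentiableAt_Lr hp)
    (h.differentiableAt_muF hp) ((h.contDiffAt_u hp).of_le (WithTop.coe_le_coe.2 le_top))
    (matrixBilin_comm (h.Gmat_isSymm p).inv) (hU.mono fun x hx => h.lowerForm_Lr hx)
    (hU.mono fun x hx => h.fderiv_apply_Lr hx)
    (ℓ := ContinuousLinearMap.proj 0) (hU.mono fun x hx => h.Lr_zero hx)
    (h.lowerForm_Lr_add_Ttil hp)

end EikonalSetup

end Coordinates

/-- the transport equation for the inverse foliation density `μ`: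
`L̊μ = −(1/2)μ[(FG)_{L̊L̊}(L̊) + 2(FG)_{T̃L̊}(L̊)] + (1/2)F_{L̊L̊}·Tφ
  + (1/2)Σ_γ G^γ_{L̊L̊}·T(∂_γφ)` on `U`. -/
theorem statement10
    (U : Set Pt) (g : Fin 5 → Fin 5 → ℝ → Pt → ℝ) (φ u : Pt → ℝ)
    (h : EikonalSetup U g φ u) :
    ∀ p ∈ U,
      vfD (Lr g φ u) (muF g φ u) p
        = -(1 / 2) * muF g φ u p *
            (FGc g φ p (Lr g φ u p) (Lr g φ u p) (Lr g φ u)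
              + 2 * FGc g φ p (Ttil g φ u p) (Lr g φ u p) (Lr g φ u))
          + (1 / 2) * Fc g φ p (Lr g φ u p) (Lr g φ u p) * vfD (Tvf g φ u) φ p
          + (1 / 2) * ∑ γ, Gc g φ γ p (Lr g φ u p) (Lr g φ u p) *
              vfD (Tvf g φ u) (pd γ φ) p := by
  intro p hp
  have hTvf : Fc g φ p (Lr g φ u p) (Lr g φ u p) * vfD (Tvf g φ u) φ p
      + ∑ γ, Gc g φ γ p (Lr g φ u p) (Lr g φ u p) * vfD (Tvf g φ u) (pd γ φ) p
      = muF g φ u p * fderiv ℝ (lowerForm g φ) p (Ttil g φ u p) (Lr g φ u p) (Lr g φ u p) := by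
    rw [← FGc, h.FGc_eq_fderiv_lowerForm hp, Tvf_eq_smul, map_smul]
    rfl
  have htransport := h.fderiv_muF_Lr hp
  simp only [map_add, add_apply] at htransport
  change fderiv ℝ (muF g φ u) p (Lr g φ u p) = _
  rw [h.FGc_eq_fderiv_lowerForm hp, h.FGc_eq_fderiv_lowerForm hp]
  linear_combination htransport - (1 / 2) * hTvf
    - muF g φ u p * h.fderiv_lowerForm_comm hp (Lr g φ u p) (Lr g φ u p) (Ttil g φ u p)

end PaperSP4D
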